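/- arXiv:2601.23078 — 2 statements merged into one kernel-verified Lean document; each statement's English description precedes it below -/
import Mathlib

section
/- Let L ⊆ ℝ^d be countable with the polynomial ball-counting property |B_r(z) ∩ L| ≤ C r^γ for all r ≥ r₀, z ∈ L. If λ > 1 + γ, then the function F(r) = (1 + r)^{−λ} satisfies the convolution estimate: there exists C_F ≥ 0 such that for all x, y ∈ L, ∑_{z ∈ L} F(|x − z|) · F(|z − y|) ≤ C_F · F(|x − y|). -/
/-!
Split `L` into the shells `R k ≤ |z - y| < R (k + 1)` with `R = max r₀ 1`: by ball counting the
`k`-th shell has at most `C (R (k + 1))^γ` points, each contributing at most `(k + 1)^(-λ)`, so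
`∑_{z ∈ L} (1 + |z - y|)^(-λ)` is bounded, uniformly in `y`, by `S = C R^γ ∑_k (k + 1)^(γ - λ)`,
which is finite as `γ - λ < -1`. Since `|x - y| ≤ |x - z| + |z - y|`, one of the two distances is at least
`|x - y| / 2`, so `F(|x - z|) F(|z - y|) ≤ 2^λ F(|x - y|) (F(|x - z|) + F(|z - y|))`, and summing
over `z` gives the estimate with `C_F = 2^λ · 2 S`.
-/

open Finset

section Weight

variable {lam : ℝ}

lemma one_add_rpow_neg_le_of_le_two_mul (hlam : 0 ≤ lam) {a c : ℝ} (hc : 0 ≤ c)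
    (hca : c ≤ 2 * a) : (1 + a) ^ (-lam) ≤ 2 ^ lam * (1 + c) ^ (-lam) := by
  calc (1 + a) ^ (-lam) ≤ ((1 + c) / 2) ^ (-lam) :=
        Real.rpow_le_rpow_of_nonpos (by positivity) (by linarith) (by linarith)
    _ = 2 ^ lam * (1 + c) ^ (-lam) := by
        rw [Real.div_rpow (by positivity) zero_le_two, Real.rpow_neg zero_le_two, div_inv_eq_mul,
          mul_comm]

lemma one_add_rpow_neg_mul_le (hlam : 0 ≤ lam) {a b c : ℝ} (ha : 0 ≤ a) (hb : 0 ≤ b)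
    (hc : 0 ≤ c) (habc : c ≤ a + b) :
    (1 + a) ^ (-lam) * (1 + b) ^ (-lam) ≤
      2 ^ lam * (1 + c) ^ (-lam) * ((1 + a) ^ (-lam) + (1 + b) ^ (-lam)) := by
  have hFa : 0 ≤ (1 + a) ^ (-lam) := by positivity
  have hFb : 0 ≤ (1 + b) ^ (-lam) := by positivity
  rcases le_total c (2 * a) with hca | hcb
  · calc (1 + a) ^ (-lam) * (1 + b) ^ (-lam) ≤ 2 ^ lam * (1 + c) ^ (-lam) * (1 + b) ^ (-lam) :=
          mul_le_mul_of_nonneg_right (one_add_rpow_neg_le_of_le_two_mul hlam hc hca) hFb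
      _ ≤ _ := mul_le_mul_of_nonneg_left (le_add_of_nonneg_left hFa) (by positivity)
  · have hcb : c ≤ 2 * b := by linarith
    calc (1 + a) ^ (-lam) * (1 + b) ^ (-lam) ≤ 2 ^ lam * (1 + c) ^ (-lam) * (1 + a) ^ (-lam) := by
          rw [mul_comm]
          exact mul_le_mul_of_nonneg_right (one_add_rpow_neg_le_of_le_two_mul hlam hc hcb) hFa
      _ ≤ _ := mul_le_mul_of_nonneg_left (le_add_of_nonneg_right hFb) (by positivity)

end Weight

lemma summable_and_tsum_le_of_sum_fiber_le {β ι : Type*} [DecidableEq ι] {f : β → ℝ} (hf : 0 ≤ f)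
    (g : β → ι)
    {b : ι → ℝ} (hb : Summable b) (hb₀ : 0 ≤ b)
    (hfiber : ∀ (u : Finset β) (i : ι), ∑ z ∈ u with g z = i, f z ≤ b i) :
    Summable f ∧ ∑' z, f z ≤ ∑' i, b i := by
  classical
  have hfin (u : Finset β) : ∑ z ∈ u, f z ≤ ∑' i, b i :=
    calc ∑ z ∈ u, f z = ∑ i ∈ u.image g, ∑ z ∈ u with g z = i, f z :=
          (sum_fiberwise_of_maps_to (fun z hz => mem_image_of_mem g hz) f).symm
      _ ≤ ∑ i ∈ u.image g, b i := sum_le_sum fun i _ => hfiber u i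
      _ ≤ ∑' i, b i := hb.sum_le_tsum _ fun i _ => hb₀ i
  exact ⟨summable_of_sum_le hf hfin, Real.tsum_le_of_sum_le hf hfin⟩

def BallCountingBound {α : Type*} [PseudoMetricSpace α] (L : Set α) (C γ r₀ : ℝ) : Prop :=
  ∀ r : ℝ, r₀ ≤ r → ∀ z ∈ L, (L ∩ Metric.ball z r).Finite ∧
    ((L ∩ Metric.ball z r).ncard : ℝ) ≤ C * r ^ γ

namespace BallCountingBound

variable {α : Type*} [PseudoMetricSpace α] {L : Set α} {C γ r₀ : ℝ}

lemma card_le (h : BallCountingBound L C γ r₀) {y : α} (hy : y ∈ L) {r : ℝ} (hr : r₀ ≤ r)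
    (u : Finset L) (hu : ∀ z ∈ u, dist (z : α) y < r) : (#u : ℝ) ≤ C * r ^ γ := by
  obtain ⟨hfin, hcard⟩ := h r hr y hy
  have hsub : ((u.map (Function.Embedding.subtype _) : Finset α) : Set α) ⊆
      L ∩ Metric.ball y r := by
    rw [coe_map]
    rintro _ ⟨z, hz, rfl⟩
    exact ⟨z.2, hu z hz⟩
  calc (#u : ℝ) = (((u.map (Function.Embedding.subtype _) : Finset α) : Set α).ncard : ℝ) := by
        rw [Set.ncard_coe_finset, card_map]
    _ ≤ C * r ^ γ := le_trans (by exact_mod_cast Set.ncard_le_ncard hsub hfin) hcard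

lemma exists_tsum_one_add_dist_rpow_neg_le (h : BallCountingBound L C γ r₀) (hC : 0 ≤ C)
    (hγ : 0 ≤ γ) {lam : ℝ} (hlam : 1 + γ < lam) :
    ∃ S : ℝ, 0 ≤ S ∧ ∀ y ∈ L,
      Summable (fun z : L => (1 + dist (z : α) y) ^ (-lam)) ∧
      ∑' z : L, (1 + dist (z : α) y) ^ (-lam) ≤ S := by
  set R : ℝ := max r₀ 1
  have hR₁ : 1 ≤ R := le_max_right _ _
  have hsum : Summable fun k : ℕ => C * R ^ γ * ((k : ℝ) + 1) ^ (γ - lam) := by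
    refine Summable.mul_left _ ?_
    exact_mod_cast (summable_nat_add_iff 1).mpr (Real.summable_nat_rpow.mpr (by linarith))
  refine ⟨∑' k : ℕ, C * R ^ γ * ((k : ℝ) + 1) ^ (γ - lam), tsum_nonneg fun k => by positivity,
    fun y hy => ?_⟩
  refine summable_and_tsum_le_of_sum_fiber_le (f := fun z : L => (1 + dist (z : α) y) ^ (-lam))
    (fun z => by positivity)
    (fun z : L => ⌊dist (z : α) y / R⌋₊) hsum (fun k => by positivity) fun u k => ?_
  have hk : (0 : ℝ) < k + 1 := by positivity
  have hshell (z : L) (hz : ⌊dist (z : α) y / R⌋₊ = k) :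
      R * k ≤ dist (z : α) y ∧ dist (z : α) y < R * (k + 1) := by
    have hlo : (⌊dist (z : α) y / R⌋₊ : ℝ) ≤ dist (z : α) y / R := Nat.floor_le (by positivity)
    have hhi := Nat.lt_floor_add_one (dist (z : α) y / R)
    rw [hz] at hlo hhi
    constructor
    · rwa [le_div_iff₀ (by positivity), mul_comm] at hlo
    · rwa [div_lt_iff₀ (by positivity), mul_comm] at hhi
  have hterm (z : L) (hz : ⌊dist (z : α) y / R⌋₊ = k) :
      (1 + dist (z : α) y) ^ (-lam) ≤ ((k : ℝ) + 1) ^ (-lam) := by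
    have hRk : (k : ℝ) ≤ R * k := le_mul_of_one_le_left (by positivity) hR₁
    exact Real.rpow_le_rpow_of_nonpos hk (by linarith [(hshell z hz).1]) (by linarith)
  have hcard : (#{z ∈ u | ⌊dist ((z : L) : α) y / R⌋₊ = k} : ℝ) ≤ C * (R * (k + 1)) ^ γ :=
    h.card_le hy (le_trans (le_max_left _ _) (le_mul_of_one_le_right (by positivity)
      (by linarith [k.cast_nonneg (α := ℝ)]))) _
      fun z hz => (hshell z (mem_filter.1 hz).2).2
  calc _ ≤ #{z ∈ u | ⌊dist ((z : L) : α) y / R⌋₊ = k} * ((k : ℝ) + 1) ^ (-lam) := by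
        simpa using sum_le_sum fun z hz => hterm z (mem_filter.1 hz).2
    _ ≤ C * (R * (k + 1)) ^ γ * ((k : ℝ) + 1) ^ (-lam) :=
        mul_le_mul_of_nonneg_right hcard (by positivity)
    _ = C * R ^ γ * ((k : ℝ) + 1) ^ (γ - lam) := by
        rw [Real.mul_rpow (by positivity) hk.le, sub_eq_add_neg, Real.rpow_add hk]
        ring

end BallCountingBound

theorem convolution_Ffunction_estimate_general
    {d : ℕ} (L : Set (EuclideanSpace ℝ (Fin d)))
    (C γ r₀ : ℝ) (hC : 0 ≤ C) (hγ : 0 < γ)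
    (hcount : ∀ r : ℝ, r₀ ≤ r → ∀ z ∈ L, (L ∩ Metric.ball z r).Finite ∧
      ((L ∩ Metric.ball z r).ncard : ℝ) ≤ C * r ^ γ)
    (lam : ℝ) (hlam : 1 + γ < lam) :
    ∃ C_F : ℝ, 0 ≤ C_F ∧ ∀ x ∈ L, ∀ y ∈ L,
      Summable (fun z : L =>
        (1 + dist x (z : EuclideanSpace ℝ (Fin d))) ^ (-lam) *
          (1 + dist (z : EuclideanSpace ℝ (Fin d)) y) ^ (-lam)) ∧
      ∑' z : L, (1 + dist x (z : EuclideanSpace ℝ (Fin d))) ^ (-lam) *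
          (1 + dist (z : EuclideanSpace ℝ (Fin d)) y) ^ (-lam)
        ≤ C_F * (1 + dist x y) ^ (-lam) := by
  obtain ⟨S, hS₀, hS⟩ :=
    BallCountingBound.exists_tsum_one_add_dist_rpow_neg_le hcount hC hγ.le hlam
  have hlam₀ : 0 ≤ lam := by linarith
  refine ⟨2 ^ lam * (2 * S), by positivity, fun x hx y hy => ?_⟩
  obtain ⟨hsumx, hlex⟩ := hS x hx
  obtain ⟨hsumy, hley⟩ := hS y hy
  simp only [fun z : L => dist_comm x (z : EuclideanSpace ℝ (Fin d))]
  set K := 2 ^ lam * (1 + dist x y) ^ (-lam)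
  have hpt (z : L) := one_add_rpow_neg_mul_le hlam₀ dist_nonneg dist_nonneg dist_nonneg
    (dist_triangle_left x y (z : EuclideanSpace ℝ (Fin d)))
  have hsum := (hsumx.add hsumy).mul_left K
  have hsummable := hsum.of_nonneg_of_le (fun z => by positivity) hpt
  refine ⟨hsummable, ?_⟩
  calc _ ≤ ∑' z : L, K * ((1 + dist (z : EuclideanSpace ℝ (Fin d)) x) ^ (-lam) +
          (1 + dist (z : EuclideanSpace ℝ (Fin d)) y) ^ (-lam)) :=
        hsummable.tsum_le_tsum hpt hsum
    _ ≤ K * (S + S) := by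
        rw [tsum_mul_left, hsumx.tsum_add hsumy]
        gcongr
    _ = 2 ^ lam * (2 * S) * (1 + dist x y) ^ (-lam) := by ring

theorem convolution_Ffunction_estimate
    {d : ℕ} (L : Set (EuclideanSpace ℝ (Fin d))) (hLc : L.Countable)
    (C γ r₀ : ℝ) (hC : 0 ≤ C) (hγ : 0 < γ) (hr₀ : 0 < r₀)
    (hcount : ∀ r : ℝ, r₀ ≤ r → ∀ z ∈ L, (L ∩ Metric.ball z r).Finite ∧
      ((L ∩ Metric.ball z r).ncard : ℝ) ≤ C * r ^ γ)
    (lam : ℝ) (hlam : 1 + γ < lam) :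
    ∃ C_F : ℝ, 0 ≤ C_F ∧ ∀ x ∈ L, ∀ y ∈ L,
      Summable (fun z : L =>
        (1 + dist x (z : EuclideanSpace ℝ (Fin d))) ^ (-lam) *
          (1 + dist (z : EuclideanSpace ℝ (Fin d)) y) ^ (-lam)) ∧
      ∑' z : L, (1 + dist x (z : EuclideanSpace ℝ (Fin d))) ^ (-lam) *
          (1 + dist (z : EuclideanSpace ℝ (Fin d)) y) ^ (-lam)
        ≤ C_F * (1 + dist x y) ^ (-lam) :=
  convolution_Ffunction_estimate_general L C γ r₀ hC hγ hcount lam hlam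
end

section
/- Let L ⊆ ℝ^d be countable with |B_r(z) ∩ L| ≤ C r^γ for all r ≥ r₀, z ∈ L, and fix k ∈ ℕ, R₀ > 0, and λ > 4 + 2k + 2γ. Then sup over x ∈ L of ∑_{z ∈ L} ( ∑_{z' ∈ B_{R₀}(z) ∩ L} (1 + |x − z'|)^{−λ} )^{1/2} · |x − z|^{k+1} is finite. -/
/-!
Moving the centre from `z` to a point `z'` of `B_{R₀}(z)` changes `1 + |x - z|` by at most the
factor `1 + R₀`, and such a ball contains boundedly many points of `L`; so the inner sum is
`≲ (1 + |x - z|)^{-λ}`, and the summand of the outer sum is `≲ (1 + |x - z|)^{-μ}` with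
`μ = λ/2 - (k + 1) > γ + 1`. Sorting the points `z` into the unit shells `n ≤ |x - z| < n + 1`,
each of which has `≲ (n + 1)^γ` points, bounds the outer sum by a multiple of
`∑ₙ (n + 1)^{γ - μ} < ∞`, uniformly in `x`.
-/

open Metric Real Set Finset

def HasPolynomialGrowth {α : Type*} [PseudoMetricSpace α] (L : Set α) (C γ r₀ : ℝ) : Prop :=
  ∀ r : ℝ, r₀ ≤ r → ∀ z ∈ L, (L ∩ ball z r).Finite ∧ ((L ∩ ball z r).ncard : ℝ) ≤ C * r ^ γ

theorem one_add_dist_rpow_neg_le {α : Type*} [PseudoMetricSpace α] {x y z : α} {R lam : ℝ}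
    (hyz : dist y z ≤ R) (hlam : 0 ≤ lam) :
    (1 + dist x y) ^ (-lam) ≤ (1 + R) ^ lam * (1 + dist x z) ^ (-lam) := by
  have hR : 0 ≤ R := dist_nonneg.trans hyz
  have hprod : 1 + dist x z ≤ (1 + R) * (1 + dist x y) := by
    nlinarith [dist_triangle x y z, dist_nonneg (x := x) (y := y)]
  have hdecay : ((1 + R) * (1 + dist x y)) ^ (-lam) ≤ (1 + dist x z) ^ (-lam) :=
    rpow_le_rpow_of_nonpos (by positivity) hprod (by linarith)
  rw [mul_rpow (by positivity) (by positivity)] at hdecay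
  calc (1 + dist x y) ^ (-lam)
      = (1 + R) ^ lam * ((1 + R) ^ (-lam) * (1 + dist x y) ^ (-lam)) := by
        rw [← mul_assoc, ← rpow_add (by positivity), add_neg_cancel, rpow_zero, one_mul]
    _ ≤ (1 + R) ^ lam * (1 + dist x z) ^ (-lam) := by gcongr

theorem rpow_half_mul_pow_le_of_le_mul_rpow_neg {T K d lam : ℝ} (m : ℕ) (hT : 0 ≤ T) (hK : 0 ≤ K)
    (hd : 0 ≤ d) (hTK : T ≤ K * (1 + d) ^ (-lam)) :
    T ^ ((1 : ℝ) / 2) * d ^ m ≤ K ^ ((1 : ℝ) / 2) * (1 + d) ^ (-(lam / 2 - m)) := by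
  calc T ^ ((1 : ℝ) / 2) * d ^ m
      ≤ (K * (1 + d) ^ (-lam)) ^ ((1 : ℝ) / 2) * (1 + d) ^ (m : ℝ) := by
        rw [rpow_natCast]
        gcongr
        linarith
    _ = K ^ ((1 : ℝ) / 2) * (1 + d) ^ (-(lam / 2 - m)) := by
        rw [mul_rpow hK (by positivity), ← rpow_mul (by positivity), mul_assoc,
          ← rpow_add (by positivity)]
        ring_nf

namespace HasPolynomialGrowth

variable {α : Type*} [PseudoMetricSpace α] {L : Set α} {C γ r₀ : ℝ}

theorem finite_inter_ball (h : HasPolynomialGrowth L C γ r₀) {z : α} (hz : z ∈ L) (R : ℝ) :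
    (L ∩ ball z R).Finite :=
  (h (max R r₀) (le_max_right _ _) z hz).1.subset
    (inter_subset_inter_right _ (ball_subset_ball (le_max_left _ _)))

theorem card_le (h : HasPolynomialGrowth L C γ r₀) {z : α} (hz : z ∈ L) {r : ℝ} (hr : r₀ ≤ r)
    {s : Set α} (u : Finset s) (hu : ∀ y ∈ u, (y : α) ∈ L ∩ ball z r) :
    (#u : ℝ) ≤ C * r ^ γ := by
  obtain ⟨hfin, hcard⟩ := h r hr z hz
  have hsub : (↑(u.map (Function.Embedding.subtype _)) : Set α) ⊆ L ∩ ball z r := by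
    simpa [Set.subset_def] using hu
  calc (#u : ℝ) = ((u.map (Function.Embedding.subtype _) : Set α).ncard : ℝ) := by
        rw [ncard_coe_finset, card_map]
    _ ≤ (L ∩ ball z r).ncard := by exact_mod_cast ncard_le_ncard hsub hfin
    _ ≤ C * r ^ γ := hcard

theorem sum_shell_le (h : HasPolynomialGrowth L C γ r₀) (hC : 0 ≤ C) (hγ : 0 ≤ γ)
    (hr₀ : 0 ≤ r₀) {x : α} (hx : x ∈ L) {μ : ℝ} (hμ : 0 ≤ μ) (u : Finset L) (n : ℕ) :
    ∑ z ∈ u.filter (fun z : L => ⌊dist x z⌋₊ = n), (1 + dist x (z : α)) ^ (-μ)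
      ≤ C * (1 + r₀) ^ γ * ((n : ℝ) + 1) ^ (γ - μ) := by
  set shell := u.filter (fun z : L => ⌊dist x z⌋₊ = n)
  have hterm : ∀ z ∈ shell, (1 + dist x (z : α)) ^ (-μ) ≤ ((n : ℝ) + 1) ^ (-μ) := by
    intro z hz
    have hn : (n : ℝ) ≤ dist x (z : α) := (mem_filter.1 hz).2 ▸ Nat.floor_le dist_nonneg
    exact rpow_le_rpow_of_nonpos (by positivity) (by linarith) (by linarith)
  have hcard : (#shell : ℝ) ≤ C * ((n : ℝ) + 1 + r₀) ^ γ := by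
    refine h.card_le hx (by linarith [n.cast_nonneg (α := ℝ)]) _ fun z hz => ⟨z.2, ?_⟩
    have hlt : dist x (z : α) < ⌊dist x (z : α)⌋₊ + 1 := Nat.lt_floor_add_one _
    rw [(mem_filter.1 hz).2] at hlt
    rw [mem_ball, dist_comm]
    linarith
  have hgrowth : ((n : ℝ) + 1 + r₀) ^ γ ≤ (1 + r₀) ^ γ * ((n : ℝ) + 1) ^ γ := by
    rw [← mul_rpow (by positivity) (by positivity)]
    gcongr
    nlinarith [n.cast_nonneg (α := ℝ)]
  calc ∑ z ∈ shell, (1 + dist x (z : α)) ^ (-μ)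
      ≤ #shell * ((n : ℝ) + 1) ^ (-μ) := by
        simpa only [nsmul_eq_mul] using sum_le_card_nsmul _ _ _ hterm
    _ ≤ C * ((1 + r₀) ^ γ * ((n : ℝ) + 1) ^ γ) * ((n : ℝ) + 1) ^ (-μ) := by
        gcongr
        exact hcard.trans (by gcongr)
    _ = C * (1 + r₀) ^ γ * ((n : ℝ) + 1) ^ (γ - μ) := by
        rw [sub_eq_add_neg, rpow_add (by positivity)]
        ring

theorem sum_one_add_dist_rpow_neg_le (h : HasPolynomialGrowth L C γ r₀) (hC : 0 ≤ C)
    (hγ : 0 ≤ γ) (hr₀ : 0 ≤ r₀) {μ : ℝ} (hμ : γ + 1 < μ) {x : α} (hx : x ∈ L)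
    (u : Finset L) :
    ∑ z ∈ u, (1 + dist x (z : α)) ^ (-μ)
      ≤ C * (1 + r₀) ^ γ * ∑' n : ℕ, ((n : ℝ) + 1) ^ (γ - μ) := by
  have hs : Summable fun n : ℕ => ((n : ℝ) + 1) ^ (γ - μ) := by
    simpa using (summable_nat_add_iff 1).2 (Real.summable_nat_rpow.2 (by linarith : γ - μ < -1))
  set radii := u.image (fun z : L => ⌊dist x z⌋₊)
  calc ∑ z ∈ u, (1 + dist x (z : α)) ^ (-μ)
      = ∑ n ∈ radii, ∑ z ∈ u.filter (fun z : L => ⌊dist x z⌋₊ = n),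
          (1 + dist x (z : α)) ^ (-μ) :=
        (sum_fiberwise_of_maps_to (fun z hz => mem_image_of_mem _ hz) _).symm
    _ ≤ ∑ n ∈ radii, C * (1 + r₀) ^ γ * ((n : ℝ) + 1) ^ (γ - μ) :=
        sum_le_sum fun n _ => h.sum_shell_le hC hγ hr₀ hx (by linarith) u n
    _ = C * (1 + r₀) ^ γ * ∑ n ∈ radii, ((n : ℝ) + 1) ^ (γ - μ) := (mul_sum _ _ _).symm
    _ ≤ C * (1 + r₀) ^ γ * ∑' n : ℕ, ((n : ℝ) + 1) ^ (γ - μ) := by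
        gcongr
        exact hs.sum_le_tsum _ fun n _ => by positivity

theorem tsum_inter_ball_le (h : HasPolynomialGrowth L C γ r₀) {R₀ lam : ℝ} (hR₀ : 0 ≤ R₀)
    (hlam : 0 ≤ lam) (x : α) {z : α} (hz : z ∈ L) :
    ∑' y : ↥(L ∩ ball z R₀), (1 + dist x y) ^ (-lam)
      ≤ C * max R₀ r₀ ^ γ * (1 + R₀) ^ lam * (1 + dist x z) ^ (-lam) := by
  have := (h.finite_inter_ball hz R₀).to_subtype
  refine Summable.of_finite.tsum_le_of_sum_le fun u => ?_
  have hcard : (#u : ℝ) ≤ C * max R₀ r₀ ^ γ :=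
    h.card_le hz (le_max_right _ _) u fun y _ => ⟨y.2.1, ball_subset_ball (le_max_left _ _) y.2.2⟩
  calc ∑ y ∈ u, (1 + dist x y) ^ (-lam)
      ≤ #u * ((1 + R₀) ^ lam * (1 + dist x z) ^ (-lam)) := by
        simpa only [nsmul_eq_mul] using
          sum_le_card_nsmul _ _ _ fun y _ => one_add_dist_rpow_neg_le (mem_ball.1 y.2.2).le hlam
    _ ≤ C * max R₀ r₀ ^ γ * ((1 + R₀) ^ lam * (1 + dist x z) ^ (-lam)) := by gcongr
    _ = C * max R₀ r₀ ^ γ * (1 + R₀) ^ lam * (1 + dist x z) ^ (-lam) := by ring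

end HasPolynomialGrowth

theorem nested_sum_decay_condition_general
    {d : ℕ} (L : Set (EuclideanSpace ℝ (Fin d)))
    (C γ r₀ : ℝ) (hC : 0 ≤ C) (hγ : 0 < γ) (hr₀ : 0 < r₀)
    (hcount : ∀ r : ℝ, r₀ ≤ r → ∀ z ∈ L, (L ∩ Metric.ball z r).Finite ∧
      ((L ∩ Metric.ball z r).ncard : ℝ) ≤ C * r ^ γ)
    (k : ℕ) (R₀ : ℝ) (hR₀ : 0 < R₀)
    (lam : ℝ) (hlam : 4 + 2 * k + 2 * γ < lam) :
    (∀ x ∈ L, ∀ z ∈ L,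
      Summable (fun z' : ↥(L ∩ Metric.ball z R₀) =>
        (1 + dist x (z' : EuclideanSpace ℝ (Fin d))) ^ (-lam))) ∧
    (∀ x ∈ L, Summable (fun z : L =>
      (∑' z' : ↥(L ∩ Metric.ball (z : EuclideanSpace ℝ (Fin d)) R₀),
          (1 + dist x (z' : EuclideanSpace ℝ (Fin d))) ^ (-lam)) ^ ((1 : ℝ) / 2) *
        dist x (z : EuclideanSpace ℝ (Fin d)) ^ (k + 1))) ∧
    ∃ M : ℝ, ∀ x ∈ L,
      ∑' z : L,
        (∑' z' : ↥(L ∩ Metric.ball (z : EuclideanSpace ℝ (Fin d)) R₀),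
            (1 + dist x (z' : EuclideanSpace ℝ (Fin d))) ^ (-lam)) ^ ((1 : ℝ) / 2) *
          dist x (z : EuclideanSpace ℝ (Fin d)) ^ (k + 1) ≤ M := by
  have hL : HasPolynomialGrowth L C γ r₀ := hcount
  have hlam₀ : 0 ≤ lam := by linarith [k.cast_nonneg (α := ℝ)]
  set μ : ℝ := lam / 2 - ((k + 1 : ℕ) : ℝ)
  have hμ : γ + 1 < μ := by push_cast [μ]; linarith
  set K := C * max R₀ r₀ ^ γ * (1 + R₀) ^ lam
  have hK : 0 ≤ K := by positivity
  have hbound : ∀ x ∈ L, ∀ u : Finset L,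
      ∑ z ∈ u, (∑' z' : ↥(L ∩ ball (z : EuclideanSpace ℝ (Fin d)) R₀),
          (1 + dist x (z' : EuclideanSpace ℝ (Fin d))) ^ (-lam)) ^ ((1 : ℝ) / 2) *
        dist x (z : EuclideanSpace ℝ (Fin d)) ^ (k + 1)
      ≤ K ^ ((1 : ℝ) / 2) * (C * (1 + r₀) ^ γ *
          ∑' n : ℕ, ((n : ℝ) + 1) ^ (γ - μ)) := fun x hx u =>
    calc _ ≤ ∑ z ∈ u, K ^ ((1 : ℝ) / 2) * (1 + dist x (z : EuclideanSpace ℝ (Fin d))) ^ (-μ) :=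
          sum_le_sum fun z _ => rpow_half_mul_pow_le_of_le_mul_rpow_neg (k + 1)
            (tsum_nonneg fun _ => by positivity) hK dist_nonneg
            (hL.tsum_inter_ball_le hR₀.le hlam₀ x z.2)
      _ ≤ _ := by
          rw [← mul_sum]
          gcongr
          exact hL.sum_one_add_dist_rpow_neg_le hC hγ.le hr₀.le hμ hx u
  have hnonneg (x : EuclideanSpace ℝ (Fin d)) (z : L) :
      0 ≤ (∑' z' : ↥(L ∩ ball (z : EuclideanSpace ℝ (Fin d)) R₀),
          (1 + dist x (z' : EuclideanSpace ℝ (Fin d))) ^ (-lam)) ^ ((1 : ℝ) / 2) *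
        dist x (z : EuclideanSpace ℝ (Fin d)) ^ (k + 1) :=
    mul_nonneg (rpow_nonneg (tsum_nonneg fun _ => by positivity) _) (by positivity)
  refine ⟨fun x _ z hz => ?_, fun x hx => summable_of_sum_le (hnonneg x) (hbound x hx),
    _, fun x hx => Real.tsum_le_of_sum_le (hnonneg x) (hbound x hx)⟩
  have := (hL.finite_inter_ball hz R₀).to_subtype
  exact Summable.of_finite

theorem nested_sum_decay_condition
    {d : ℕ} (L : Set (EuclideanSpace ℝ (Fin d))) (hLc : L.Countable)
    (C γ r₀ : ℝ) (hC : 0 ≤ C) (hγ : 0 < γ) (hr₀ : 0 < r₀)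
    (hcount : ∀ r : ℝ, r₀ ≤ r → ∀ z ∈ L, (L ∩ Metric.ball z r).Finite ∧
      ((L ∩ Metric.ball z r).ncard : ℝ) ≤ C * r ^ γ)
    (k : ℕ) (R₀ : ℝ) (hR₀ : 0 < R₀)
    (lam : ℝ) (hlam : 4 + 2 * k + 2 * γ < lam) :
    (∀ x ∈ L, ∀ z ∈ L,
      Summable (fun z' : ↥(L ∩ Metric.ball z R₀) =>
        (1 + dist x (z' : EuclideanSpace ℝ (Fin d))) ^ (-lam))) ∧
    (∀ x ∈ L, Summable (fun z : L =>
      (∑' z' : ↥(L ∩ Metric.ball (z : EuclideanSpace ℝ (Fin d)) R₀),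
          (1 + dist x (z' : EuclideanSpace ℝ (Fin d))) ^ (-lam)) ^ ((1 : ℝ) / 2) *
        dist x (z : EuclideanSpace ℝ (Fin d)) ^ (k + 1))) ∧
    ∃ M : ℝ, ∀ x ∈ L,
      ∑' z : L,
        (∑' z' : ↥(L ∩ Metric.ball (z : EuclideanSpace ℝ (Fin d)) R₀),
            (1 + dist x (z' : EuclideanSpace ℝ (Fin d))) ^ (-lam)) ^ ((1 : ℝ) / 2) *
          dist x (z : EuclideanSpace ℝ (Fin d)) ^ (k + 1) ≤ M :=
  nested_sum_decay_condition_general L C γ r₀ hC hγ hr₀ hcount k R₀ hR₀ lam hlam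
end
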